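/- Let G be a finite subgroup of O(2n+1), n ≥ 2, such that every nontrivial element of G has eigenspace of eigenvalue 1 of dimension at most 1. Then there exists a unit vector v ∈ ℝ^(2n+1), a character χ: G → {±1}, such that every g ∈ G satisfies g(v) = χ(g)·v and g preserves the orthogonal complement of v, and the restriction of G to the orthogonal complement {v}^⊥ ≅ ℝ^(2n) acts freely on the unit sphere S^(2n-1) of {v}^⊥. -/

import Mathlib

/-- The dimension of the eigenspace of eigenvalue 1 of (the linear map given by) a matrix. -/
noncomputable def fixedSpaceDim {m : ℕ} (g : Matrix (Fin m) (Fin m) ℝ) : ℕ :=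
  Module.finrank ℝ ↥(Module.End.eigenspace (Matrix.toLin' g) 1)

/-!
Let `K` be the subgroup of rotations of `G`. In odd dimension every rotation has an axis, so every
nontrivial element of `K` fixes exactly a line. If `|K|` is odd, an element of `K` preserving an
axis fixes it pointwise, so each nontrivial element fixes exactly one axis, and Burnside's lemma
shows that there is only one axis. If `|K|` is even, `K` contains an involution, which is `-1` on
the complement of its axis; since the dimension is at least `5`, two such involutions would
multiply to an element fixing a plane, so the involution is unique, hence central in `G`, and its
axis is fixed by `K`. Either way (and trivially when `K = 1`) `G` preserves the line of a unit
vector `v`, which gives `χ`. A nontrivial `g` fixing some `w ⊥ v` would fix a plane, unless it is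
an involution with an axis; but such an involution has determinant `1` and so fixes `v` as well.
-/

open Matrix Module Pointwise

/-- Burnside: the fixed points of the nontrivial elements account for `|α| + |K| - 1 = q |K|`,
`q` the number of orbits, while nontrivial stabilizers make every orbit have at most `|K| / 2`
points. -/
theorem MulAction.subsingleton_of_card_fixedBy_eq_one {K α : Type*} [Group K] [Finite K]
    [MulAction K α] [Finite α] (hfix : ∀ k : K, k ≠ 1 → Nat.card (fixedBy α k) = 1)
    (hstab : ∀ a : α, stabilizer K a ≠ ⊥) : Subsingleton α := by
  classical
  have := Fintype.ofFinite K
  have := Fintype.ofFinite α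
  set N := Nat.card K
  set q := Nat.card (orbitRel.Quotient K α)
  have hburnside : Nat.card α + (N - 1) = q * N := by
    have hnontrivial : ∑ k ∈ Finset.univ.erase (1 : K), Nat.card (fixedBy α k) = N - 1 := by
      rw [Finset.sum_congr rfl fun k hk => hfix k (Finset.ne_of_mem_erase hk), Finset.sum_const,
        smul_eq_mul, mul_one, Finset.card_erase_of_mem (Finset.mem_univ _), Finset.card_univ,
        ← Nat.card_eq_fintype_card]
    have := sum_card_fixedBy_eq_card_orbits_mul_card_group K α
    simp only [← Nat.card_eq_fintype_card] at this
    rw [← this, ← Finset.add_sum_erase _ _ (Finset.mem_univ 1), hnontrivial]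
    simp [fixedBy_one_eq_univ]
  have horbit : ∀ a : α, 2 * Nat.card (orbit K a) ≤ N := by
    intro a
    rw [show N = Nat.card K from rfl, Nat.card_coe_set_eq, ← index_stabilizer,
      ← (stabilizer K a).card_mul_index]
    exact Nat.mul_le_mul_right _ ((Subgroup.one_lt_card_iff_ne_bot _).mpr (hstab a))
  have hsum : 2 * Nat.card α ≤ q * N := by
    rw [Nat.card_congr (selfEquivSigmaOrbits K α), Nat.card_sigma, Finset.mul_sum]
    calc _ ≤ ∑ _ω : orbitRel.Quotient K α, N := Finset.sum_le_sum fun ω _ => horbit ω.out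
      _ = q * N := by simp [q, Nat.card_eq_fintype_card]
  have hN : 0 < N := Nat.card_pos
  refine Finite.card_le_one_iff_subsingleton.mp ?_
  rcases Nat.lt_or_ge q 2 with hq | hq
  · interval_cases q <;> omega
  · have := Nat.mul_le_mul_right N hq
    omega

theorem exists_monoidHom_smul_eq_smul {Γ 𝕜 V : Type*} [Group Γ] [Field 𝕜] [AddCommGroup V]
    [Module 𝕜 V] [DistribMulAction Γ V] [SMulCommClass Γ 𝕜 V] {v : V} (hv : v ≠ 0)
    (h : ∀ g : Γ, ∃ c : 𝕜, g • v = c • v) :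
    ∃ χ : Γ →* 𝕜ˣ, ∀ g, g • v = (χ g : 𝕜) • v := by
  choose c hc using h
  have hone : c 1 = 1 := smul_left_injective 𝕜 hv <| show c 1 • v = (1 : 𝕜) • v by
    rw [← hc, one_smul, one_smul]
  have hmul : ∀ g h, c (g * h) = c g * c h := fun g h => smul_left_injective 𝕜 hv <|
    show c (g * h) • v = (c g * c h) • v by
      rw [← hc, mul_smul, hc h, smul_comm, hc g, smul_smul, mul_comm]
  exact ⟨MonoidHom.toHomUnits ⟨⟨c, hone⟩, hmul⟩, hc⟩

theorem smul_ne_neg_of_odd_orderOf {M V : Type*} [Monoid M] [AddCommGroup V]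
    [DistribMulAction M V] [IsAddTorsionFree V] {g : M} (hg : Odd (orderOf g)) {v : V}
    (hv : v ≠ 0) : g • v ≠ -v := by
  intro h
  have hpow : ∀ n : ℕ, g ^ n • v = (-1 : ℤ) ^ n • v := by
    intro n
    induction n with
    | zero => rw [pow_zero, pow_zero, one_smul, one_smul]
    | succ n ih => rw [pow_succ, mul_smul, h, smul_neg, ih, pow_succ, mul_neg_one, neg_smul]
  have := hpow (orderOf g)
  rw [pow_orderOf_eq_one, one_smul, hg.neg_one_pow, neg_one_smul] at this
  exact hv (self_eq_neg.mp this)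

variable {ι : Type*} [Fintype ι]

theorem Matrix.card_le_finrank_ker_mulVecLin_add {κ : Type*} [Fintype κ] (M : Matrix κ ι ℝ) :
    Fintype.card ι ≤ finrank ℝ (LinearMap.ker M.mulVecLin) + Fintype.card κ := by
  have := M.mulVecLin.finrank_range_add_finrank_ker
  have := Submodule.finrank_le (LinearMap.range M.mulVecLin)
  simp only [finrank_fintype_fun_eq_card] at *
  omega

theorem dotProduct_inv_sqrt_smul_self {v : ι → ℝ} (hv : v ≠ 0) :
    ((√(v ⬝ᵥ v))⁻¹ • v) ⬝ᵥ ((√(v ⬝ᵥ v))⁻¹ • v) = 1 := by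
  have hpos : 0 < v ⬝ᵥ v := lt_of_le_of_ne (Fintype.sum_nonneg fun i => mul_self_nonneg (v i))
    (Ne.symm (dotProduct_self_eq_zero.not.mpr hv))
  rw [smul_dotProduct, dotProduct_smul, smul_smul, smul_eq_mul, ← mul_inv,
    Real.mul_self_sqrt hpos.le, inv_mul_cancel₀ hpos.ne']

variable [DecidableEq ι]

theorem Matrix.det_smul_vecMulVec_sub_one (c : ℝ) (v : ι → ℝ) :
    (c • vecMulVec v v - 1).det = (-1) ^ Fintype.card ι * (1 - c * (v ⬝ᵥ v)) := by
  rw [← neg_sub, det_neg, vecMulVec_eq (Fin 1), ← smul_mul, ← replicateCol_smul,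
    det_one_sub_mul_comm, replicateRow_mul_replicateCol, det_unique]
  simp [mul_comm c]

namespace OrthogonalGroup

variable {g : orthogonalGroup ι ℝ} {u v w : ι → ℝ}

theorem dotProduct_smul_smul (g : orthogonalGroup ι ℝ) (x y : ι → ℝ) :
    (g • x) ⬝ᵥ (g • y) = x ⬝ᵥ y := by
  change ((g : Matrix ι ι ℝ) *ᵥ x) ⬝ᵥ ((g : Matrix ι ι ℝ) *ᵥ y) = x ⬝ᵥ y
  rw [dotProduct_mulVec, ← mulVec_transpose, mulVec_mulVec,
    (mem_orthogonalGroup_iff' ι ℝ).mp g.2, one_mulVec]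

theorem eq_one_or_eq_neg_one_of_smul_eq_smul (hv : v ≠ 0) {c : ℝ} (h : g • v = c • v) :
    c = 1 ∨ c = -1 := by
  have := dotProduct_smul_smul g v v
  rw [h, smul_dotProduct, dotProduct_smul, smul_smul, smul_eq_mul] at this
  exact mul_self_eq_one_iff.mp <|
    (mul_eq_right₀ (dotProduct_self_eq_zero.not.mpr hv)).mp this

theorem smul_eq_self_or_neg_of_smul_eq_smul (hv : v ≠ 0) {c : ℝ} (h : g • v = c • v) :
    g • v = v ∨ g • v = -v := by
  rcases eq_one_or_eq_neg_one_of_smul_eq_smul hv h with rfl | rfl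
  · exact Or.inl (by rw [h, one_smul])
  · exact Or.inr (by rw [h, neg_one_smul])

theorem dotProduct_smul_eq_zero {c : ℝ} (hc : c ≠ 0) (hv : g • v = c • v) (hvw : v ⬝ᵥ w = 0) :
    v ⬝ᵥ (g • w) = 0 := by
  have := dotProduct_smul_smul g v w
  rw [hv, smul_dotProduct, hvw, smul_eq_mul, mul_eq_zero] at this
  exact this.resolve_left hc

theorem det_eq_one_or_neg_one (g : orthogonalGroup ι ℝ) :
    (g : Matrix ι ι ℝ).det = 1 ∨ (g : Matrix ι ι ℝ).det = -1 := by
  have := congrArg det ((mem_orthogonalGroup_iff' ι ℝ).mp g.2)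
  rwa [det_mul, det_transpose, det_one, mul_self_eq_one_iff] at this

theorem exists_smul_eq_self_of_det_eq_one (hι : Odd (Fintype.card ι))
    (hdet : (g : Matrix ι ι ℝ).det = 1) : ∃ w : ι → ℝ, w ≠ 0 ∧ g • w = w := by
  set A : Matrix ι ι ℝ := (g : Matrix ι ι ℝ)
  have hsub : (A - 1).det = 0 := by
    have : (A - 1).det = -(A - 1).det :=
      calc (A - 1).det = (A * (1 - Aᵀ)).det := by
            rw [mul_sub, mul_one, (mem_orthogonalGroup_iff ι ℝ).mp g.2]
        _ = (-(A - 1))ᵀ.det := by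
            rw [det_mul, hdet, one_mul, neg_sub, transpose_sub, transpose_one]
        _ = -(A - 1).det := by rw [det_transpose, det_neg, hι.neg_one_pow, neg_one_mul]
    linarith
  obtain ⟨w, hw0, hw⟩ := exists_mulVec_eq_zero_iff.mpr hsub
  exact ⟨w, hw0, by rwa [sub_mulVec, one_mulVec, sub_eq_zero] at hw⟩

/-- For `ι = Fin m`, `finrank ℝ (fixedSubspace g)` is `fixedSpaceDim g` by definition. -/
noncomputable def fixedSubspace (g : orthogonalGroup ι ℝ) : Submodule ℝ (ι → ℝ) :=
  End.eigenspace (toLin' (g : Matrix ι ι ℝ)) 1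

theorem mem_fixedSubspace : v ∈ fixedSubspace g ↔ g • v = v := by
  rw [fixedSubspace, End.mem_eigenspace_iff, toLin'_apply, one_smul]; rfl

theorem fixedSubspace_eq_span_singleton (h : finrank ℝ (fixedSubspace g) ≤ 1) (hv0 : v ≠ 0)
    (hv : g • v = v) : fixedSubspace g = ℝ ∙ v := by
  have hle : ℝ ∙ v ≤ fixedSubspace g := (Submodule.span_singleton_le_iff_mem _ _).mpr
    (mem_fixedSubspace.mpr hv)
  exact (Submodule.eq_of_le_of_finrank_le hle (by rwa [finrank_span_singleton hv0])).symm

theorem eq_zero_of_dotProduct_eq_zero (h : finrank ℝ (fixedSubspace g) ≤ 1) (hv0 : v ≠ 0)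
    (hv : g • v = v) (hw : g • w = w) (hvw : v ⬝ᵥ w = 0) : w = 0 := by
  have hmem : w ∈ ℝ ∙ v := by
    rw [← fixedSubspace_eq_span_singleton h hv0 hv]; exact mem_fixedSubspace.mpr hw
  obtain ⟨c, rfl⟩ := Submodule.mem_span_singleton.mp hmem
  rw [dotProduct_smul, smul_eq_mul, mul_eq_zero] at hvw
  rw [hvw.resolve_right (dotProduct_self_eq_zero.not.mpr hv0), zero_smul]

theorem smul_add_smul_self_of_mul_self (hgg : g * g = 1) (u : ι → ℝ) :
    g • (u + g • u) = u + g • u := by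
  rw [smul_add, smul_smul, hgg, one_smul, add_comm]

theorem smul_eq_neg_of_dotProduct_eq_zero (hgg : g * g = 1)
    (h : finrank ℝ (fixedSubspace g) ≤ 1) (hv0 : v ≠ 0) (hv : g • v = v) (hu : v ⬝ᵥ u = 0) :
    g • u = -u := by
  have hperp : v ⬝ᵥ (u + g • u) = 0 := by
    rw [dotProduct_add, hu, ← dotProduct_smul_smul g, hv, smul_smul, hgg, one_smul, hu, add_zero]
  exact eq_neg_of_add_eq_zero_right
    (eq_zero_of_dotProduct_eq_zero h hv0 hv (smul_add_smul_self_of_mul_self hgg u) hperp)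

theorem smul_eq_neg_of_fixedSubspace_eq_bot (hgg : g * g = 1) (hfix : fixedSubspace g = ⊥)
    (u : ι → ℝ) : g • u = -u := by
  have := mem_fixedSubspace.mpr (smul_add_smul_self_of_mul_self hgg u)
  rw [hfix, Submodule.mem_bot] at this
  exact eq_neg_of_add_eq_zero_right this

/-- Minus the reflection in `v⊥`. -/
theorem coe_eq_of_mul_self_eq_one (hgg : g * g = 1) (h : finrank ℝ (fixedSubspace g) ≤ 1)
    (hv0 : v ≠ 0) (hv : g • v = v) :
    (g : Matrix ι ι ℝ) = (2 / (v ⬝ᵥ v)) • vecMulVec v v - 1 := by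
  have hvv : v ⬝ᵥ v ≠ 0 := dotProduct_self_eq_zero.not.mpr hv0
  refine ext_iff_mulVec.mpr fun u => ?_
  set c := (v ⬝ᵥ u) / (v ⬝ᵥ v)
  have hperp : v ⬝ᵥ (u - c • v) = 0 := by
    rw [dotProduct_sub, dotProduct_smul, smul_eq_mul, div_mul_cancel₀ _ hvv, sub_self]
  have key := smul_eq_neg_of_dotProduct_eq_zero hgg h hv0 hv hperp
  rw [smul_sub, smul_comm, hv] at key
  calc (g : Matrix ι ι ℝ) *ᵥ u = g • u := rfl
    _ = (2 * c) • v - u := by rw [sub_eq_iff_eq_add] at key; rw [key]; module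
    _ = _ := by
      rw [sub_mulVec, one_mulVec, smul_mulVec, vecMulVec_mulVec, op_smul_eq_smul, smul_smul]
      simp only [c]
      module

theorem det_eq_one_of_mul_self_eq_one (hι : Odd (Fintype.card ι)) (hgg : g * g = 1)
    (h : finrank ℝ (fixedSubspace g) ≤ 1) (hv0 : v ≠ 0) (hv : g • v = v) :
    (g : Matrix ι ι ℝ).det = 1 := by
  rw [coe_eq_of_mul_self_eq_one hgg h hv0 hv, det_smul_vecMulVec_sub_one, hι.neg_one_pow,
    div_mul_cancel₀ _ (dotProduct_self_eq_zero.not.mpr hv0)]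
  norm_num

theorem mem_smul_submodule_iff (g : orthogonalGroup ι ℝ) (S : Submodule ℝ (ι → ℝ)) :
    v ∈ g • S ↔ g⁻¹ • v ∈ S := by
  -- `g • S` is the pointwise action of the underlying matrix of `g`.
  change v ∈ (g : Matrix ι ι ℝ) • S ↔ _
  rw [Submodule.mem_smul_pointwise_iff_exists]
  constructor
  · rintro ⟨y, hy, rfl⟩
    exact (inv_smul_smul g y).symm ▸ hy
  · exact fun hv => ⟨g⁻¹ • v, hv, smul_inv_smul g v⟩

theorem smul_fixedSubspace (g h : orthogonalGroup ι ℝ) :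
    g • fixedSubspace h = fixedSubspace (g * h * g⁻¹) := by
  ext v
  rw [mem_smul_submodule_iff, mem_fixedSubspace, mem_fixedSubspace, mul_smul, mul_smul,
    smul_eq_iff_eq_inv_smul g]

def FixesNoPlane (G : Subgroup (orthogonalGroup ι ℝ)) : Prop :=
  ∀ g ∈ G, g ≠ 1 → finrank ℝ (fixedSubspace g) ≤ 1

def rotations (G : Subgroup (orthogonalGroup ι ℝ)) : Subgroup (orthogonalGroup ι ℝ) :=
  G ⊓ (detMonoidHom.comp (orthogonalGroup ι ℝ).subtype).ker

theorem mem_rotations {G : Subgroup (orthogonalGroup ι ℝ)} :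
    g ∈ rotations G ↔ g ∈ G ∧ (g : Matrix ι ι ℝ).det = 1 := by
  simp [rotations, MonoidHom.mem_ker]

namespace FixesNoPlane

variable {G K : Subgroup (orthogonalGroup ι ℝ)} {g : orthogonalGroup ι ℝ} {v w : ι → ℝ}

theorem mono (hG : FixesNoPlane G) (hKG : K ≤ G) : FixesNoPlane K :=
  fun g hg => hG g (hKG hg)

/-- The product of two involutions is the identity on the common orthogonal complement of
their axes, which has dimension at least `2`. -/
theorem eq_of_mul_self_eq_one (hG : FixesNoPlane G) (h4 : 4 ≤ Fintype.card ι)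
    {s t : orthogonalGroup ι ℝ} (hs : s ∈ G) (ht : t ∈ G) (hs1 : s ≠ 1) (ht1 : t ≠ 1)
    (hss : s * s = 1) (htt : t * t = 1) (hv0 : v ≠ 0) (hv : s • v = v) (hw0 : w ≠ 0)
    (hw : t • w = w) : s = t := by
  by_contra hne
  have hst1 : s * t ≠ 1 := fun h =>
    hne (by rw [eq_inv_of_mul_eq_one_left h, inv_eq_of_mul_eq_one_left htt])
  have hle : LinearMap.ker (of ![v, w]).mulVecLin ≤ fixedSubspace (s * t) := by
    intro u hu
    have hu' : ![v ⬝ᵥ u, w ⬝ᵥ u] = 0 := by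
      rw [← hu]; ext i; fin_cases i <;> rfl
    rw [mem_fixedSubspace, mul_smul,
      smul_eq_neg_of_dotProduct_eq_zero htt (hG t ht ht1) hw0 hw (congrFun hu' 1), smul_neg,
      smul_eq_neg_of_dotProduct_eq_zero hss (hG s hs hs1) hv0 hv (congrFun hu' 0), neg_neg]
  have := card_le_finrank_ker_mulVecLin_add (of ![v, w])
  have := Submodule.finrank_mono hle
  have := hG _ (mul_mem hs ht) hst1
  simp only [Fintype.card_fin] at *
  omega

def axes (K : Subgroup (orthogonalGroup ι ℝ)) : Type _ :=
  {L : Submodule ℝ (ι → ℝ) // ∃ k ∈ K, k ≠ 1 ∧ fixedSubspace k = L}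

instance (K : Subgroup (orthogonalGroup ι ℝ)) : MulAction K (axes K) where
  smul k L := ⟨(k : orthogonalGroup ι ℝ) • L.1, by
    obtain ⟨h, hh, hh1, hL⟩ := L.2
    refine ⟨k * h * (k : orthogonalGroup ι ℝ)⁻¹, K.mul_mem (K.mul_mem k.2 hh) (K.inv_mem k.2),
      ?_, by rw [← hL, smul_fixedSubspace]⟩
    rwa [Ne, mul_inv_eq_one, mul_eq_left]⟩
  one_smul L := Subtype.ext (one_smul (orthogonalGroup ι ℝ) L.1)
  mul_smul k k' L :=
    Subtype.ext (mul_smul (k : orthogonalGroup ι ℝ) (k' : orthogonalGroup ι ℝ) L.1)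

instance [Finite K] : Finite (axes K) :=
  Set.Finite.to_subtype <|
    (Set.finite_range fun k : K => fixedSubspace (k : orthogonalGroup ι ℝ)).subset
      fun _ ⟨k, hk, _, hkL⟩ => ⟨⟨k, hk⟩, hkL⟩

theorem smul_axes_eq_iff_of_odd_card (hι : Odd (Fintype.card ι))
    (hdet : ∀ k ∈ K, (k : Matrix ι ι ℝ).det = 1) (hK : FixesNoPlane K) (hodd : Odd (Nat.card K))
    {k : K} (hk1 : k ≠ 1) (L : axes K) : k • L = L ↔ L.1 = fixedSubspace k := by
  obtain ⟨_, h, hh, hh1, rfl⟩ := L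
  have hk1' : (k : orthogonalGroup ι ℝ) ≠ 1 := fun h1 => hk1 (Subtype.ext h1)
  constructor
  · intro hkL
    obtain ⟨w, hw0, hw⟩ := exists_smul_eq_self_of_det_eq_one hι (hdet h hh)
    have hkh : (k : orthogonalGroup ι ℝ) • fixedSubspace h = fixedSubspace h :=
      congrArg Subtype.val hkL
    have hkw : (k : orthogonalGroup ι ℝ) • w ∈ fixedSubspace h := by
      rw [← hkh, mem_smul_submodule_iff, inv_smul_smul]
      exact mem_fixedSubspace.mpr hw
    rw [fixedSubspace_eq_span_singleton (hK h hh hh1) hw0 hw, Submodule.mem_span_singleton] at hkw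
    obtain ⟨c, hc⟩ := hkw
    -- `k` maps the axis `ℝ ∙ w` to itself, and an element of odd order cannot reverse it.
    have hodd' : Odd (orderOf (k : orthogonalGroup ι ℝ)) := by
      rw [Subgroup.orderOf_coe]; exact hodd.of_dvd_nat (orderOf_dvd_natCard k)
    have hkw' := (smul_eq_self_or_neg_of_smul_eq_smul hw0 hc.symm).resolve_right
      (smul_ne_neg_of_odd_orderOf hodd' hw0)
    change fixedSubspace h = fixedSubspace k
    rw [fixedSubspace_eq_span_singleton (hK h hh hh1) hw0 hw,
      fixedSubspace_eq_span_singleton (hK k k.2 hk1') hw0 hkw']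
  · intro (hL : fixedSubspace h = fixedSubspace k)
    refine Subtype.ext (?_ : (k : orthogonalGroup ι ℝ) • fixedSubspace h = fixedSubspace h)
    rw [hL, smul_fixedSubspace, mul_inv_cancel_right]

theorem subsingleton_axes_of_odd_card (hι : Odd (Fintype.card ι))
    (hdet : ∀ k ∈ K, (k : Matrix ι ι ℝ).det = 1) (hK : FixesNoPlane K) [Finite K]
    (hodd : Odd (Nat.card K)) : Subsingleton (axes K) := by
  refine MulAction.subsingleton_of_card_fixedBy_eq_one (K := K) (fun k hk1 => ?_) fun L => ?_
  · have hk1' : (k : orthogonalGroup ι ℝ) ≠ 1 := fun h1 => hk1 (Subtype.ext h1)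
    refine Nat.card_eq_one_iff_exists.mpr ⟨⟨⟨fixedSubspace k, k, k.2, hk1', rfl⟩, ?_⟩, ?_⟩
    · exact (smul_axes_eq_iff_of_odd_card hι hdet hK hodd hk1 _).mpr rfl
    · exact fun ⟨L, hL⟩ => Subtype.ext <| Subtype.ext <|
        (smul_axes_eq_iff_of_odd_card hι hdet hK hodd hk1 L).mp hL
  · obtain ⟨h, hh, hh1, hL⟩ := L.2
    intro hbot
    have hstab : (⟨h, hh⟩ : K) ∈ MulAction.stabilizer K L :=
      (smul_axes_eq_iff_of_odd_card hι hdet hK hodd (k := ⟨h, hh⟩)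
        (fun h1 => hh1 (congrArg Subtype.val h1)) L).mpr hL.symm
    rw [hbot, Subgroup.mem_bot] at hstab
    exact hh1 (congrArg Subtype.val hstab)

theorem exists_forall_smul_eq_self_of_odd_card (hι : Odd (Fintype.card ι))
    (hdet : ∀ k ∈ K, (k : Matrix ι ι ℝ).det = 1) (hK : FixesNoPlane K) [Finite K]
    (hodd : Odd (Nat.card K)) : ∃ v : ι → ℝ, v ≠ 0 ∧ ∀ k ∈ K, k • v = v := by
  rcases K.bot_or_exists_ne_one with hbot | ⟨k₀, hk₀, hk₀1⟩
  · obtain ⟨v, hv0, -⟩ := exists_smul_eq_self_of_det_eq_one hι (g := 1) det_one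
    exact ⟨v, hv0, fun k hk => by rw [hbot, Subgroup.mem_bot] at hk; rw [hk, one_smul]⟩
  obtain ⟨v, hv0, hv⟩ := exists_smul_eq_self_of_det_eq_one hι (hdet k₀ hk₀)
  have := subsingleton_axes_of_odd_card hι hdet hK hodd
  refine ⟨v, hv0, fun k hk => ?_⟩
  by_cases hk1 : k = 1
  · rw [hk1, one_smul]
  have hfix : fixedSubspace k = fixedSubspace k₀ := congrArg Subtype.val
    (Subsingleton.elim (α := axes K) ⟨_, k, hk, hk1, rfl⟩ ⟨_, k₀, hk₀, hk₀1, rfl⟩)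
  exact mem_fixedSubspace.mp (hfix ▸ mem_fixedSubspace.mpr hv)

/-- Conjugates of `t` are involutions with an axis, hence equal to `t`; so `t` is central and its
axis is preserved. -/
theorem smul_eq_self_or_neg_of_mul_self_eq_one (hG : FixesNoPlane G) (h4 : 4 ≤ Fintype.card ι)
    {t : orthogonalGroup ι ℝ} (htG : t ∈ G) (ht1 : t ≠ 1) (htt : t * t = 1) (hv0 : v ≠ 0)
    (hv : t • v = v) (hg : g ∈ G) : g • v = v ∨ g • v = -v := by
  have hconj : g * t * g⁻¹ = t := by
    refine hG.eq_of_mul_self_eq_one h4 (G.mul_mem (G.mul_mem hg htG) (G.inv_mem hg)) htG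
      (by rwa [Ne, mul_inv_eq_one, mul_eq_left]) ht1 ?_ htt ((smul_ne_zero_iff_ne g).mpr hv0)
      (by rw [mul_smul, mul_smul, inv_smul_smul, hv]) hv0 hv
    rw [show g * t * g⁻¹ * (g * t * g⁻¹) = g * (t * t) * g⁻¹ by group, htt, mul_one,
      mul_inv_cancel]
  have hgv : g • v ∈ ℝ ∙ v := by
    rw [← fixedSubspace_eq_span_singleton (hG t htG ht1) hv0 hv, mem_fixedSubspace,
      ← hconj, mul_smul, mul_smul, inv_smul_smul, hv]
  obtain ⟨c, hc⟩ := Submodule.mem_span_singleton.mp hgv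
  exact smul_eq_self_or_neg_of_smul_eq_smul hv0 hc.symm

/-- A rotation reversing the axis of the involution `t` would fix a vector orthogonal to it and
thus be a second involution with an axis. -/
theorem exists_forall_smul_eq_self_of_even_card (hι : Odd (Fintype.card ι))
    (h5 : 5 ≤ Fintype.card ι) (hdet : ∀ k ∈ K, (k : Matrix ι ι ℝ).det = 1)
    (hK : FixesNoPlane K) [Finite K] (heven : Even (Nat.card K)) :
    ∃ v : ι → ℝ, v ≠ 0 ∧ ∀ k ∈ K, k • v = v := by
  obtain ⟨⟨t, htK⟩, ht⟩ := exists_prime_orderOf_dvd_card' (G := K) 2 heven.two_dvd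
  rw [Subgroup.orderOf_mk] at ht
  have ht1 : t ≠ 1 := by rintro rfl; simp at ht
  have htt : t * t = 1 := by rw [← sq, ← ht, pow_orderOf_eq_one]
  obtain ⟨v, hv0, hv⟩ := exists_smul_eq_self_of_det_eq_one hι (hdet t htK)
  refine ⟨v, hv0, fun k hk => (hK.smul_eq_self_or_neg_of_mul_self_eq_one (by omega) htK ht1 htt
    hv0 hv hk).resolve_right fun hneg => ?_⟩
  obtain ⟨w, hw0, hw⟩ := exists_smul_eq_self_of_det_eq_one hι (hdet k hk)
  have hvw : v ⬝ᵥ w = 0 := by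
    have := dotProduct_smul_smul k v w
    rw [hneg, hw, neg_dotProduct] at this
    linarith
  have hkk : k * k = 1 := by
    by_contra hkk
    exact hw0 (eq_zero_of_dotProduct_eq_zero (hK _ (K.mul_mem hk hk) hkk) hv0
      (by rw [mul_smul, hneg, smul_neg, hneg, neg_neg]) (by rw [mul_smul, hw, hw]) hvw)
  have hk1 : k ≠ 1 := by
    rintro rfl
    exact hv0 (self_eq_neg.mp (by rwa [one_smul] at hneg))
  rw [hK.eq_of_mul_self_eq_one (by omega) hk htK hk1 ht1 hkk htt hw0 hw hv0 hv, hv] at hneg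
  exact hv0 (self_eq_neg.mp hneg)

theorem exists_forall_smul_eq_self_of_det_eq_one (hι : Odd (Fintype.card ι))
    (h5 : 5 ≤ Fintype.card ι) (hdet : ∀ k ∈ K, (k : Matrix ι ι ℝ).det = 1)
    (hK : FixesNoPlane K) [Finite K] : ∃ v : ι → ℝ, v ≠ 0 ∧ ∀ k ∈ K, k • v = v :=
  (Nat.even_or_odd (Nat.card K)).elim (exists_forall_smul_eq_self_of_even_card hι h5 hdet hK)
    (exists_forall_smul_eq_self_of_odd_card hι hdet hK)

theorem smul_eq_self_or_neg_of_forall_rotations (hG : FixesNoPlane G) (hv0 : v ≠ 0)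
    (hv : ∀ k ∈ rotations G, k • v = v) {k₀ : orthogonalGroup ι ℝ} (hk₀ : k₀ ∈ rotations G)
    (hk₀1 : k₀ ≠ 1) (hg : g ∈ G) : g • v = v ∨ g • v = -v := by
  have hconj : g⁻¹ * k₀ * g ∈ rotations G := by
    refine ⟨G.mul_mem (G.mul_mem (G.inv_mem hg) hk₀.1) hg, ?_⟩
    simpa using (MonoidHom.normal_ker _).conj_mem _ hk₀.2 g⁻¹
  have hgv : g • v ∈ ℝ ∙ v := by
    rw [← fixedSubspace_eq_span_singleton (hG k₀ hk₀.1 hk₀1) hv0 (hv k₀ hk₀), mem_fixedSubspace,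
      ← smul_left_cancel_iff g⁻¹, ← mul_smul, ← mul_smul, hv _ hconj, inv_smul_smul]
  obtain ⟨c, hc⟩ := Submodule.mem_span_singleton.mp hgv
  exact smul_eq_self_or_neg_of_smul_eq_smul hv0 hc.symm

theorem smul_eq_neg_of_rotations_eq_bot (hι : Odd (Fintype.card ι)) (hG : FixesNoPlane G)
    (hrot : rotations G = ⊥) (hg : g ∈ G) (hg1 : g ≠ 1) (u : ι → ℝ) : g • u = -u := by
  have hrot1 : ∀ k ∈ G, (k : Matrix ι ι ℝ).det = 1 → k = 1 := fun k hk hdet => by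
    simpa [hrot] using mem_rotations.mpr ⟨hk, hdet⟩
  have hdet : (g : Matrix ι ι ℝ).det = -1 :=
    (det_eq_one_or_neg_one g).resolve_left fun h => hg1 (hrot1 g hg h)
  have hgg : g * g = 1 := hrot1 _ (G.mul_mem hg hg) (by simp [hdet])
  refine smul_eq_neg_of_fixedSubspace_eq_bot hgg ((Submodule.eq_bot_iff _).mpr fun w hw => ?_) u
  by_contra hw0
  have := det_eq_one_of_mul_self_eq_one hι hgg (hG g hg hg1) hw0 (mem_fixedSubspace.mp hw)
  norm_num [hdet] at this

theorem exists_axis (hι : Odd (Fintype.card ι)) (h5 : 5 ≤ Fintype.card ι) [Finite G]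
    (hG : FixesNoPlane G) : ∃ v : ι → ℝ, v ⬝ᵥ v = 1 ∧ (∀ k ∈ rotations G, k • v = v) ∧
      ∀ g ∈ G, g • v = v ∨ g • v = -v := by
  rcases (rotations G).bot_or_exists_ne_one with hrot | ⟨k₀, hk₀, hk₀1⟩
  · obtain ⟨i⟩ : Nonempty ι := Fintype.card_pos_iff.mp hι.pos
    refine ⟨Pi.single i 1, by simp, fun k hk => ?_, fun g hg => ?_⟩
    · rw [hrot, Subgroup.mem_bot] at hk
      rw [hk, one_smul]
    · by_cases hg1 : g = 1
      · exact Or.inl (by rw [hg1, one_smul])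
      · exact Or.inr (hG.smul_eq_neg_of_rotations_eq_bot hι hrot hg hg1 _)
  have : Finite (rotations G) :=
    Finite.of_injective _ (Subgroup.inclusion_injective (inf_le_left : rotations G ≤ G))
  obtain ⟨v, hv0, hv⟩ := (hG.mono inf_le_left).exists_forall_smul_eq_self_of_det_eq_one hι h5
    (fun k hk => (mem_rotations.mp hk).2)
  have hu1 := dotProduct_inv_sqrt_smul_self hv0
  have hu0 : (√(v ⬝ᵥ v))⁻¹ • v ≠ 0 := fun h0 => by simp [h0] at hu1
  have hu : ∀ k ∈ rotations G, k • (√(v ⬝ᵥ v))⁻¹ • v = (√(v ⬝ᵥ v))⁻¹ • v :=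
    fun k hk => by rw [smul_comm, hv k hk]
  exact ⟨_, hu1, hu, fun g hg => hG.smul_eq_self_or_neg_of_forall_rotations hu0 hu hk₀ hk₀1 hg⟩

theorem smul_ne_self_of_dotProduct_eq_zero (hι : Odd (Fintype.card ι)) (hG : FixesNoPlane G)
    (hv0 : v ≠ 0) (hrot : ∀ k ∈ rotations G, k • v = v) (hpm : ∀ g ∈ G, g • v = v ∨ g • v = -v)
    (hg : g ∈ G) (hg1 : g ≠ 1) (hvw : v ⬝ᵥ w = 0) (hw0 : w ≠ 0) : g • w ≠ w := by
  intro hw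
  rcases hpm g hg with hgv | hgv
  · exact hw0 (eq_zero_of_dotProduct_eq_zero (hG g hg hg1) hv0 hgv hw hvw)
  by_cases hgg : g * g = 1
  · have hdet := det_eq_one_of_mul_self_eq_one hι hgg (hG g hg hg1) hw0 hw
    rw [hrot g (mem_rotations.mpr ⟨hg, hdet⟩)] at hgv
    exact hv0 (self_eq_neg.mp hgv)
  · exact hw0 (eq_zero_of_dotProduct_eq_zero (hG _ (G.mul_mem hg hg) hgg) hv0
      (by rw [mul_smul, hgv, smul_neg, hgv, neg_neg]) (by rw [mul_smul, hw, hw]) hvw)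

end FixesNoPlane

end OrthogonalGroup

open OrthogonalGroup

/-- Let `G` be a finite subgroup of `O(2n+1)`, `n ≥ 2`, with every nontrivial element having
eigenspace of eigenvalue `1` of dimension at most one. Then there are a unit vector `v` and a
character `χ : G → {±1}` such that every `g ∈ G` satisfies `g(v) = χ(g)·v`, preserves the
orthogonal complement of `v`, and `G` acts freely on the unit sphere of that complement. -/
theorem splitting_of_finite_orthogonal_group
    (n : ℕ) (hn : 2 ≤ n)
    (G : Subgroup (Matrix.orthogonalGroup (Fin (2*n+1)) ℝ)) (hG : Finite G)
    (heig : ∀ g ∈ G, g ≠ 1 →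
      fixedSpaceDim (g : Matrix (Fin (2*n+1)) (Fin (2*n+1)) ℝ) ≤ 1) :
    ∃ v : Fin (2*n+1) → ℝ, dotProduct v v = 1 ∧
      ∃ χ : G →* ℝˣ,
        (∀ g : G, (χ g : ℝ) = 1 ∨ (χ g : ℝ) = -1) ∧
        (∀ g : G, Matrix.mulVec
            ((g : Matrix.orthogonalGroup (Fin (2*n+1)) ℝ) :
              Matrix (Fin (2*n+1)) (Fin (2*n+1)) ℝ) v = (χ g : ℝ) • v) ∧
        (∀ g : G, ∀ w : Fin (2*n+1) → ℝ, dotProduct v w = 0 →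
          dotProduct v (Matrix.mulVec
            ((g : Matrix.orthogonalGroup (Fin (2*n+1)) ℝ) :
              Matrix (Fin (2*n+1)) (Fin (2*n+1)) ℝ) w) = 0) ∧
        (∀ g : G, (g : Matrix.orthogonalGroup (Fin (2*n+1)) ℝ) ≠ 1 →
          ∀ w : Fin (2*n+1) → ℝ, dotProduct v w = 0 → w ≠ 0 →
            Matrix.mulVec ((g : Matrix.orthogonalGroup (Fin (2*n+1)) ℝ) :
              Matrix (Fin (2*n+1)) (Fin (2*n+1)) ℝ) w ≠ w) := by
  have hι : Odd (Fintype.card (Fin (2 * n + 1))) := by simp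
  have h5 : 5 ≤ Fintype.card (Fin (2 * n + 1)) := by rw [Fintype.card_fin]; omega
  have hplane : FixesNoPlane G := heig
  obtain ⟨v, hv1, hrot, hpm⟩ := hplane.exists_axis hι h5
  have hv0 : v ≠ 0 := fun h0 => by simp [h0] at hv1
  obtain ⟨χ, hχ⟩ := exists_monoidHom_smul_eq_smul (Γ := G) (𝕜 := ℝ) hv0 fun g =>
    (hpm g g.2).elim (fun h => ⟨1, by rw [one_smul]; exact h⟩)
      fun h => ⟨-1, by rw [neg_one_smul]; exact h⟩
  refine ⟨v, hv1, χ, fun g => eq_one_or_eq_neg_one_of_smul_eq_smul hv0 (hχ g), hχ,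
    fun g w hw => dotProduct_smul_eq_zero (χ g).ne_zero (hχ g) hw,
    fun g hg1 w hvw hw0 =>
      hplane.smul_ne_self_of_dotProduct_eq_zero hι hv0 hrot hpm g.2 hg1 hvw hw0⟩
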